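/- arXiv:0901.2859 — 2 statements merged into one kernel-verified Lean document; each statement's English description precedes it below -/
import Mathlib

section
/- Let A be an invertible n×n real tridiagonal matrix, let F ∈ ℝⁿ, and let X be the solution of A X = F. Fix indices 1 = n₀ ≤ n₁ < n₂ < … < n_p < n and set n_{p+1} = n + 1, with 1 < n_i < n for i = 1,…,p. Assume each matrix B^R_{n_j} (1 ≤ j ≤ p) and B^L_{n_j} (1 ≤ j ≤ p) is invertible, and let Z^R_{n_j} and Z^L_{n_j} be defined as below. For j = 1,…,p+1 define β^L_j = Σ_{k=n_{j−1}}^{n_j − 1} F_k · (A⁻¹)_{n_{j−1}, k}, and for j = 1,…,p define β^R_j = Σ_{k=n_{j−1}}^{n_j − 1} F_k · (A⁻¹)_{n_j, k}. Then for every i = 1,…,p: X_{n_i} = Σ_{j=1}^{i} β^R_j · (Z^R_{n_j})_{n_i} + Σ_{j=i+1}^{p+1} β^L_j · (Z^L_{n_{j−1}})_{n_i}. -/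
open Matrix Finset

/-- Extension of the paper's one-sided matrix `B^L` (boundary at the
0-indexed position `k`) to an `n × n` matrix: rows below `k` are the
corresponding rows of `A`, row `k` and all rows above it are identity rows.
For a tridiagonal `A` this is the block matrix `B^L ⊕ I`. -/
def BLfull {n : ℕ} (A : Matrix (Fin n) (Fin n) ℝ) (k : Fin n) :
    Matrix (Fin n) (Fin n) ℝ :=
  fun i j => if (i : ℕ) < (k : ℕ) then A i j else if i = j then 1 else 0

/-- Extension of the paper's one-sided matrix `B^R` (boundary at the
0-indexed position `k`) to an `n × n` matrix: rows above `k` are the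
corresponding rows of `A`, row `k` and all rows below it are identity rows.
For a tridiagonal `A` this is the block matrix `I ⊕ B^R`. -/
def BRfull {n : ℕ} (A : Matrix (Fin n) (Fin n) ℝ) (k : Fin n) :
    Matrix (Fin n) (Fin n) ℝ :=
  fun i j => if (k : ℕ) < (i : ℕ) then A i j else if i = j then 1 else 0

/-!
Since `X = A⁻¹ F`, the component `X (m i)` is `∑ k, F k * A⁻¹ (m i) k`, and the indices `k` split
into the blocks `[m (j - 1), m j)`. The column `c = A⁻¹ e_k` is annihilated by every row of `A`
other than row `k`. If `k < q`, tridiagonality makes the truncation of `c` to the indices `≥ q`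
solve the right boundary system at `q` with right-hand side `c q • e_q`, so invertibility of that
system gives `c = c q • Z^R_q` on the indices `≥ q`; symmetrically `c = c q • Z^L_q` on the
indices `≤ q` when `q ≤ k`. Taking `q = m j` for the blocks `j ≤ i` and `q = m (j - 1)` for the
blocks `j > i` factors each block sum as `β * Z`.
-/

section OneSided

variable {n : ℕ} (A : Matrix (Fin n) (Fin n) ℝ) (q : Fin n) (v : Fin n → ℝ)

lemma BRfull_mulVec_apply (r : Fin n) :
    (BRfull A q *ᵥ v) r = if q < r then (A *ᵥ v) r else v r := by
  unfold BRfull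
  split_ifs <;> simp_all [mulVec, dotProduct]

lemma BLfull_mulVec_apply (r : Fin n) :
    (BLfull A q *ᵥ v) r = if r < q then (A *ᵥ v) r else v r := by
  unfold BLfull
  split_ifs <;> simp_all [mulVec, dotProduct]

variable {A q}

lemma eq_mul_of_BRfull_mulVec_eq_single (hband : ∀ r t, t < q → q < r → A r t = 0)
    {Z c : Fin n → ℝ} (hU : IsUnit (BRfull A q)) (hZ : BRfull A q *ᵥ Z = Pi.single q 1)
    (hc : ∀ r, q < r → (A *ᵥ c) r = 0) {i : Fin n} (hi : q ≤ i) :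
    c i = c q * Z i := by
  set v : Fin n → ℝ := fun t => if q ≤ t then c t else 0
  have hv : BRfull A q *ᵥ v = BRfull A q *ᵥ (c q • Z) := by
    ext r
    rw [mulVec_smul, hZ, BRfull_mulVec_apply]
    split_ifs with hr
    · have hAv : (A *ᵥ v) r = (A *ᵥ c) r := by
        simp only [mulVec, dotProduct]
        refine sum_congr rfl fun t _ => ?_
        by_cases ht : q ≤ t
        · simp [v, ht]
        · simp [v, ht, hband r t (not_le.mp ht) hr]
      simp [hAv, hc r hr, hr.ne']
    · rcases eq_or_ne r q with rfl | hrq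
      · simp [v]
      · simp [v, hrq, (lt_of_le_of_ne (not_lt.mp hr) hrq).not_ge]
  simpa [v, hi] using congrFun (mulVec_injective_iff_isUnit.mpr hU hv) i

lemma eq_mul_of_BLfull_mulVec_eq_single (hband : ∀ r t, q < t → r < q → A r t = 0)
    {Z c : Fin n → ℝ} (hU : IsUnit (BLfull A q)) (hZ : BLfull A q *ᵥ Z = Pi.single q 1)
    (hc : ∀ r, r < q → (A *ᵥ c) r = 0) {i : Fin n} (hi : i ≤ q) :
    c i = c q * Z i := by
  set v : Fin n → ℝ := fun t => if t ≤ q then c t else 0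
  have hv : BLfull A q *ᵥ v = BLfull A q *ᵥ (c q • Z) := by
    ext r
    rw [mulVec_smul, hZ, BLfull_mulVec_apply]
    split_ifs with hr
    · have hAv : (A *ᵥ v) r = (A *ᵥ c) r := by
        simp only [mulVec, dotProduct]
        refine sum_congr rfl fun t _ => ?_
        by_cases ht : t ≤ q
        · simp [v, ht]
        · simp [v, ht, hband r t (not_le.mp ht) hr]
      simp [hAv, hc r hr, hr.ne]
    · rcases eq_or_ne r q with rfl | hrq
      · simp [v]
      · simp [v, hrq, (lt_of_le_of_ne (not_lt.mp hr) hrq.symm).not_ge]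
  simpa [v, hi] using congrFun (mulVec_injective_iff_isUnit.mpr hU hv) i

end OneSided

section InverseColumns

variable {n : ℕ} {A : Matrix (Fin n) (Fin n) ℝ} {q : Fin n} {Z : Fin n → ℝ}

lemma mulVec_inv_col_apply_of_ne (hA : IsUnit A) {k r : Fin n} (hrk : r ≠ k) :
    (A *ᵥ fun t => A⁻¹ t k) r = 0 := by
  change (A * A⁻¹) r k = 0
  rw [mul_nonsing_inv A ((isUnit_iff_isUnit_det A).mp hA), one_apply_ne hrk]

lemma inv_apply_eq_mul_of_BRfull (hA : IsUnit A) (hband : ∀ r t, t < q → q < r → A r t = 0)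
    (hU : IsUnit (BRfull A q)) (hZ : BRfull A q *ᵥ Z = Pi.single q 1) {i k : Fin n}
    (hk : k < q) (hi : q ≤ i) : A⁻¹ i k = A⁻¹ q k * Z i :=
  eq_mul_of_BRfull_mulVec_eq_single hband hU hZ
    (fun _ hr => mulVec_inv_col_apply_of_ne hA (hk.trans hr).ne') hi

lemma inv_apply_eq_mul_of_BLfull (hA : IsUnit A) (hband : ∀ r t, q < t → r < q → A r t = 0)
    (hU : IsUnit (BLfull A q)) (hZ : BLfull A q *ᵥ Z = Pi.single q 1) {i k : Fin n}
    (hk : q ≤ k) (hi : i ≤ q) : A⁻¹ i k = A⁻¹ q k * Z i :=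
  eq_mul_of_BLfull_mulVec_eq_single hband hU hZ
    (fun _ hr => mulVec_inv_col_apply_of_ne hA (hr.trans_le hk).ne) hi

end InverseColumns

lemma sum_Icc_ite_blocks {M : Type*} [AddCommMonoid M] {m : ℕ → ℕ} {N : ℕ}
    (hm : ∀ j < N, m j ≤ m (j + 1)) {k : ℕ} (hk : m 0 ≤ k) (x : M) :
    ∑ j ∈ Icc 1 N, (if m (j - 1) ≤ k ∧ k < m j then x else 0) = if k < m N then x else 0 := by
  induction N with
  | zero => simp [hk]
  | succ N ih =>
    rw [sum_Icc_succ_top (by omega), ih fun j hj => hm j (by omega), Nat.add_sub_cancel]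
    have := hm N (by omega)
    split_ifs <;> first | (exfalso; omega) | simp

lemma sum_eq_sum_Icc_blocks {M : Type*} [AddCommMonoid M] {n N : ℕ} {m : ℕ → ℕ}
    (hm : ∀ j < N, m j ≤ m (j + 1)) (h0 : m 0 = 0) (hN : m N = n) (f : Fin n → M) :
    ∑ k, f k = ∑ j ∈ Icc 1 N, ∑ k : Fin n, if m (j - 1) ≤ k ∧ k < m j then f k else 0 := by
  rw [sum_comm]
  refine sum_congr rfl fun k _ => ?_
  rw [sum_Icc_ite_blocks hm (by omega), if_pos (by omega)]

lemma sum_ite_mul_eq_sum_ite_mul {ι R : Type*} [Fintype ι] [CommSemiring R] {P : ι → Prop}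
    [DecidablePred P] {F g h : ι → R} {z : R} (hg : ∀ k, P k → g k = h k * z) :
    ∑ k, (if P k then F k * g k else 0) = (∑ k, if P k then F k * h k else 0) * z := by
  rw [sum_mul]
  refine sum_congr rfl fun k _ => ?_
  split_ifs with hk
  · rw [hg k hk, mul_assoc]
  · rw [zero_mul]

theorem stmt_4_general (n p : ℕ)
    (A : Matrix (Fin n) (Fin n) ℝ)
    (htri : ∀ i j : Fin n, (i : ℕ) + 1 < (j : ℕ) ∨ (j : ℕ) + 1 < (i : ℕ) → A i j = 0)
    (hA : IsUnit A)
    (F X : Fin n → ℝ) (hX : A.mulVec X = F)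
    (m : ℕ → ℕ) (hm0 : m 0 = 0) (hmtop : m (p + 1) = n)
    (hmono : ∀ j, 1 ≤ j → j ≤ p → m j < m (j + 1))
    (ZR ZL : ℕ → Fin n → ℝ) (βR βL : ℕ → ℝ)
    (hZR : ∀ j, ∀ _ : 1 ≤ j, ∀ _ : j ≤ p, ∀ hj : m j < n,
      IsUnit (BRfull A ⟨m j, hj⟩) ∧
        (BRfull A ⟨m j, hj⟩).mulVec (ZR j) = Pi.single ⟨m j, hj⟩ 1)
    (hZL : ∀ j, ∀ _ : 1 ≤ j, ∀ _ : j ≤ p, ∀ hj : m j < n,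
      IsUnit (BLfull A ⟨m j, hj⟩) ∧
        (BLfull A ⟨m j, hj⟩).mulVec (ZL j) = Pi.single ⟨m j, hj⟩ 1)
    (hβR : ∀ j, ∀ _ : 1 ≤ j, ∀ _ : j ≤ p, ∀ hj : m j < n,
      βR j = ∑ k : Fin n,
        if m (j - 1) ≤ (k : ℕ) ∧ (k : ℕ) < m j then F k * A⁻¹ ⟨m j, hj⟩ k else 0)
    (hβL : ∀ j, ∀ _ : 1 ≤ j, ∀ _ : j ≤ p + 1, ∀ hj : m (j - 1) < n,
      βL j = ∑ k : Fin n,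
        if m (j - 1) ≤ (k : ℕ) ∧ (k : ℕ) < m j then F k * A⁻¹ ⟨m (j - 1), hj⟩ k else 0) :
    ∀ i, ∀ _ : 1 ≤ i, ∀ _ : i ≤ p, ∀ hi : m i < n,
      X ⟨m i, hi⟩ =
        (∑ j ∈ Finset.Icc 1 i, βR j * ZR j ⟨m i, hi⟩) +
          ∑ j ∈ Finset.Icc (i + 1) (p + 1), βL j * ZL (j - 1) ⟨m i, hi⟩ := by
  intro i hi1 hip hi
  have hstep : ∀ j < p + 1, m j ≤ m (j + 1) := by
    rintro (_ | j) hj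
    · simp [hm0]
    · exact (hmono (j + 1) (by omega) (by omega)).le
  have hmle : ∀ a b, a ≤ b → b ≤ p + 1 → m a ≤ m b := by
    intro a b hab hb
    induction b, hab using Nat.le_induction with
    | base => exact le_rfl
    | succ b _ ih => exact (ih (by omega)).trans (hstep b (by omega))
  have hmlt : ∀ j, 1 ≤ j → j ≤ p → m j < n := fun j hj1 hjp =>
    hmtop ▸ (hmono j hj1 hjp).trans_le (hmle _ _ (by omega) le_rfl)
  have hXi : X ⟨m i, hi⟩ = ∑ k, F k * A⁻¹ ⟨m i, hi⟩ k := by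
    have hinv : A⁻¹ *ᵥ F = X := by
      rw [← hX, mulVec_mulVec, nonsing_inv_mul _ ((isUnit_iff_isUnit_det A).mp hA), one_mulVec]
    exact (congrFun hinv _).symm.trans (dotProduct_comm _ _)
  have hsplit : Icc 1 (p + 1) = Icc 1 i ∪ Icc (i + 1) (p + 1) := by
    ext; simp only [mem_Icc, mem_union]; omega
  rw [hXi, sum_eq_sum_Icc_blocks hstep hm0 hmtop, hsplit,
    sum_union (disjoint_left.mpr fun j hj hj' => by simp only [mem_Icc] at hj hj'; omega)]
  congr 1
  · refine sum_congr rfl fun j hj => ?_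
    obtain ⟨hj1, hji⟩ := mem_Icc.mp hj
    obtain ⟨hU, hZ⟩ := hZR j hj1 (hji.trans hip) (hmlt j hj1 (hji.trans hip))
    rw [hβR j hj1 (hji.trans hip) (hmlt j hj1 (hji.trans hip))]
    exact sum_ite_mul_eq_sum_ite_mul fun k hk => inv_apply_eq_mul_of_BRfull hA
      (fun r t ht hr => htri r t (Or.inr (by omega))) hU hZ hk.2 (hmle j i hji (by omega))
  · refine sum_congr rfl fun j hj => ?_
    obtain ⟨hij, hjp⟩ := mem_Icc.mp hj
    obtain ⟨hU, hZ⟩ := hZL (j - 1) (by omega) (by omega) (hmlt (j - 1) (by omega) (by omega))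
    rw [hβL j (by omega) hjp (hmlt (j - 1) (by omega) (by omega))]
    exact sum_ite_mul_eq_sum_ite_mul fun k hk => inv_apply_eq_mul_of_BLfull hA
      (fun r t ht hr => htri r t (Or.inl (by omega))) hU hZ hk.1
      (hmle i (j - 1) (by omega) (by omega))

/-- Theorem 2 of the paper (the main parallel sweep theorem), stated
0-indexed: `m 0 = 0`, `m (p+1) = n`, `0 < m i < n - 1` for `1 ≤ i ≤ p`.
Each selected component `X (m i)` of the solution of the tridiagonal system
`A X = F` is a linear combination of the locally computable coefficients
`βR`, `βL` (built from rows of `A⁻¹`) with weights given by the solutions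
`ZR`, `ZL` of the one-sided boundary systems. -/
theorem stmt_4 (n p : ℕ) (hn : 2 ≤ n)
    (A : Matrix (Fin n) (Fin n) ℝ)
    (htri : ∀ i j : Fin n, (i : ℕ) + 1 < (j : ℕ) ∨ (j : ℕ) + 1 < (i : ℕ) → A i j = 0)
    (hA : IsUnit A)
    (F X : Fin n → ℝ) (hX : A.mulVec X = F)
    (m : ℕ → ℕ) (hm0 : m 0 = 0) (hmtop : m (p + 1) = n)
    (hpos : ∀ i, 1 ≤ i → i ≤ p → 0 < m i ∧ m i < n - 1)
    (hmono : ∀ j, 1 ≤ j → j ≤ p → m j < m (j + 1))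
    (ZR ZL : ℕ → Fin n → ℝ) (βR βL : ℕ → ℝ)
    (hZR : ∀ j, ∀ _ : 1 ≤ j, ∀ _ : j ≤ p, ∀ hj : m j < n,
      IsUnit (BRfull A ⟨m j, hj⟩) ∧
        (BRfull A ⟨m j, hj⟩).mulVec (ZR j) = Pi.single ⟨m j, hj⟩ 1)
    (hZL : ∀ j, ∀ _ : 1 ≤ j, ∀ _ : j ≤ p, ∀ hj : m j < n,
      IsUnit (BLfull A ⟨m j, hj⟩) ∧
        (BLfull A ⟨m j, hj⟩).mulVec (ZL j) = Pi.single ⟨m j, hj⟩ 1)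
    (hβR : ∀ j, ∀ _ : 1 ≤ j, ∀ _ : j ≤ p, ∀ hj : m j < n,
      βR j = ∑ k : Fin n,
        if m (j - 1) ≤ (k : ℕ) ∧ (k : ℕ) < m j then F k * A⁻¹ ⟨m j, hj⟩ k else 0)
    (hβL : ∀ j, ∀ _ : 1 ≤ j, ∀ _ : j ≤ p + 1, ∀ hj : m (j - 1) < n,
      βL j = ∑ k : Fin n,
        if m (j - 1) ≤ (k : ℕ) ∧ (k : ℕ) < m j then F k * A⁻¹ ⟨m (j - 1), hj⟩ k else 0) :
    ∀ i, ∀ _ : 1 ≤ i, ∀ _ : i ≤ p, ∀ hi : m i < n,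
      X ⟨m i, hi⟩ =
        (∑ j ∈ Finset.Icc 1 i, βR j * ZR j ⟨m i, hi⟩) +
          ∑ j ∈ Finset.Icc (i + 1) (p + 1), βL j * ZL (j - 1) ⟨m i, hi⟩ :=
  stmt_4_general n p A htri hA F X hX m hm0 hmtop hmono ZR ZL βR βL hZR hZL hβR hβL
end

section
/- Let A be an n×n real tridiagonal matrix, let F ∈ ℝⁿ, and let X satisfy A X = F. Fix indices 1 ≤ k₁ < m < k₂ ≤ n. Let A' be the (k₂ − k₁ + 1)×(k₂ − k₁ + 1) matrix indexed by k₁,…,k₂ whose first row is e_{k₁}ᵀ, whose last row is e_{k₂}ᵀ, and whose interior rows coincide with rows k₁+1,…,k₂−1 of A restricted to columns k₁,…,k₂; assume A' is invertible. Let W solve A' W = q where q_{k₁} = q_{k₂} = 0 and q_s = F_s for k₁ < s < k₂; let R solve A' R = e_{k₁}; let L solve A' L = e_{k₂}. Then X_m = W_m + X_{k₁} · R_m + X_{k₂} · L_m. -/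
/-!
Restrict `X` to the block `k₁, …, k₂`, calling the restriction `Y`. The boundary rows of `A'` just
read off `Y` at the two ends. An interior row `s` of `A'` is row `k₁ + s` of `A` restricted to the
block. Since `A` is tridiagonal, that row has no nonzero entries outside the block, so
`(A' Y)_s = (A X)_{k₁+s} = F_{k₁+s}`. Hence `A' Y = q + X_{k₁} e_{k₁} + X_{k₂} e_{k₂}`. Since
`A' (W + X_{k₁} R + X_{k₂} L)` equals the same vector and `A'` is invertible, the two vectors
coincide.
-/

open Matrix Finset

variable {R : Type*} [CommRing R] {n k N : ℕ}

def Matrix.IsTridiagonal (A : Matrix (Fin n) (Fin n) R) : Prop :=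
  ∀ i j : Fin n, (i : ℕ) + 1 < (j : ℕ) ∨ (j : ℕ) + 1 < (i : ℕ) → A i j = 0

def blockIndex (hkN : k + N < n) (s : Fin (N + 1)) : Fin n :=
  ⟨k + s, by omega⟩

@[simp]
lemma blockIndex_val (hkN : k + N < n) (s : Fin (N + 1)) : (blockIndex hkN s : ℕ) = k + s :=
  rfl

lemma Matrix.mulVec_apply_of_row_eq_ite {M : Matrix (Fin N) (Fin N) R} {i : Fin N}
    (hrow : ∀ r : Fin N, M i r = if (r : ℕ) = i then 1 else 0) (v : Fin N → R) :
    (M *ᵥ v) i = v i := by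
  simp [mulVec, dotProduct, hrow, Fin.val_inj]

lemma Matrix.IsTridiagonal.mulVec_apply_blockIndex {A : Matrix (Fin n) (Fin n) R}
    (hA : A.IsTridiagonal) (hkN : k + N < n) (X : Fin n → R) {s : Fin (N + 1)}
    (hs₀ : 0 < (s : ℕ)) (hsN : (s : ℕ) < N) :
    (A *ᵥ X) (blockIndex hkN s) =
      ∑ r, A (blockIndex hkN s) (blockIndex hkN r) * X (blockIndex hkN r) := by
  symm
  refine sum_of_injOn (blockIndex hkN) (fun r _ r' _ h ↦ ?_) (fun _ _ ↦ mem_univ _)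
    (fun j _ hj ↦ ?_) (fun _ _ ↦ rfl)
  · simpa [Fin.ext_iff] using h
  · have hout : (j : ℕ) < k ∨ k + N < j := by
      by_contra! hin
      exact hj ⟨⟨j - k, by omega⟩, by simp, Fin.ext (by simp; omega)⟩
    exact mul_eq_zero_of_left (hA (blockIndex hkN s) j (by simp only [blockIndex_val]; omega)) _

lemma Matrix.IsTridiagonal.mulVec_comp_blockIndex {A : Matrix (Fin n) (Fin n) R}
    (hA : A.IsTridiagonal) (hN : 0 < N) (hkN : k + N < n) {F X : Fin n → R} (hX : A *ᵥ X = F)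
    {A' : Matrix (Fin (N + 1)) (Fin (N + 1)) R}
    (hrow0 : ∀ r : Fin (N + 1), A' 0 r = if (r : ℕ) = 0 then 1 else 0)
    (hrowlast : ∀ r : Fin (N + 1), A' (Fin.last N) r = if (r : ℕ) = N then 1 else 0)
    (hrowint : ∀ s r : Fin (N + 1), 0 < (s : ℕ) → (s : ℕ) < N →
      A' s r = A (blockIndex hkN s) (blockIndex hkN r))
    {q : Fin (N + 1) → R} (hq0 : q 0 = 0) (hqlast : q (Fin.last N) = 0)
    (hqint : ∀ s : Fin (N + 1), 0 < (s : ℕ) → (s : ℕ) < N → q s = F (blockIndex hkN s)) :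
    A' *ᵥ (X ∘ blockIndex hkN) =
      q + X (blockIndex hkN 0) • Pi.single 0 1
        + X (blockIndex hkN (Fin.last N)) • Pi.single (Fin.last N) 1 := by
  have h0N : (0 : Fin (N + 1)) ≠ Fin.last N := by simp [Fin.ext_iff]; omega
  ext s
  by_cases hs₀ : (s : ℕ) = 0
  · obtain rfl : s = 0 := Fin.ext hs₀
    simp [mulVec_apply_of_row_eq_ite hrow0, hq0, h0N]
  by_cases hsN : (s : ℕ) = N
  · obtain rfl : s = Fin.last N := Fin.ext hsN
    simp [mulVec_apply_of_row_eq_ite hrowlast, hqlast, h0N.symm]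
  have hs₀' : 0 < (s : ℕ) := by omega
  have hsN' : (s : ℕ) < N := by omega
  simp only [mulVec, dotProduct, hrowint s _ hs₀' hsN', Function.comp_apply]
  rw [← hA.mulVec_apply_blockIndex hkN X hs₀' hsN', hX]
  simp [hqint s hs₀' hsN', Fin.ext_iff, hs₀, hsN]

/-- The superposition identity underlying Theorem 3 (the dichotomy step) of
the paper, stated 0-indexed with `k₁ < m < k₂ < n`: on the block
`k₁, …, k₂` the matrix `A'` has first row `e_{k₁}ᵀ`, last row `e_{k₂}ᵀ`,
and interior rows coinciding with the rows of `A` restricted to the columns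
`k₁, …, k₂`.  If `W` is the particular solution (zero boundary data,
interior right-hand side `F`), and `R`, `L` solve the homogeneous boundary
problems `A' R = e_{k₁}`, `A' L = e_{k₂}`, then
`X m = W m + X k₁ * R m + X k₂ * L m`. -/
theorem stmt_5 (n k₁ m k₂ : ℕ) (h1 : k₁ < m) (h2 : m < k₂) (h3 : k₂ < n)
    (A : Matrix (Fin n) (Fin n) ℝ)
    (htri : ∀ i j : Fin n, (i : ℕ) + 1 < (j : ℕ) ∨ (j : ℕ) + 1 < (i : ℕ) → A i j = 0)
    (F X : Fin n → ℝ) (hX : A.mulVec X = F)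
    (A' : Matrix (Fin (k₂ - k₁ + 1)) (Fin (k₂ - k₁ + 1)) ℝ)
    (hrow0 : ∀ r : Fin (k₂ - k₁ + 1), A' ⟨0, by omega⟩ r = if (r : ℕ) = 0 then 1 else 0)
    (hrowlast : ∀ r : Fin (k₂ - k₁ + 1),
      A' ⟨k₂ - k₁, by omega⟩ r = if (r : ℕ) = k₂ - k₁ then 1 else 0)
    (hrowint : ∀ s r : Fin (k₂ - k₁ + 1), 0 < (s : ℕ) → (s : ℕ) < k₂ - k₁ →
      A' s r = A ⟨k₁ + (s : ℕ), by have := s.isLt; omega⟩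
        ⟨k₁ + (r : ℕ), by have := r.isLt; omega⟩)
    (hA' : IsUnit A')
    (q W R L : Fin (k₂ - k₁ + 1) → ℝ)
    (hq0 : q ⟨0, by omega⟩ = 0) (hqlast : q ⟨k₂ - k₁, by omega⟩ = 0)
    (hqint : ∀ s : Fin (k₂ - k₁ + 1), 0 < (s : ℕ) → (s : ℕ) < k₂ - k₁ →
      q s = F ⟨k₁ + (s : ℕ), by have := s.isLt; omega⟩)
    (hW : A'.mulVec W = q)
    (hR : A'.mulVec R = Pi.single ⟨0, by omega⟩ 1)
    (hL : A'.mulVec L = Pi.single ⟨k₂ - k₁, by omega⟩ 1) :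
    X ⟨m, by omega⟩ =
      W ⟨m - k₁, by omega⟩ + X ⟨k₁, by omega⟩ * R ⟨m - k₁, by omega⟩
        + X ⟨k₂, by omega⟩ * L ⟨m - k₁, by omega⟩ := by
  have hkN : k₁ + (k₂ - k₁) < n := by omega
  have hblock := IsTridiagonal.mulVec_comp_blockIndex htri (by omega) hkN hX
    hrow0 hrowlast hrowint hq0 hqlast hqint
  have hsol : X ∘ blockIndex hkN =
      W + X (blockIndex hkN 0) • R + X (blockIndex hkN (Fin.last _)) • L :=
    mulVec_injective_iff_isUnit.2 hA' <| by
      rw [hblock, mulVec_add, mulVec_add, mulVec_smul, mulVec_smul, hW, hR, hL]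
      rfl
  have hm : blockIndex hkN ⟨m - k₁, by omega⟩ = ⟨m, by omega⟩ := Fin.ext (by simp; omega)
  have hk₁ : blockIndex hkN 0 = ⟨k₁, by omega⟩ := rfl
  have hk₂ : blockIndex hkN (Fin.last _) = ⟨k₂, h3⟩ := Fin.ext (by simp; omega)
  simpa [hm, hk₁, hk₂] using congrFun hsol ⟨m - k₁, by omega⟩
end
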